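/- Let M be an n×n positive-definite Hermitian matrix and let 0 < t. Define E(t) = e^{tL} M e^{tL} where L is Hermitian with simple maximal eigenvalue ω and unit eigenvector u. Then e^{-2tω} E(t) converges as t → ∞ to ⟨u|M|u⟩ |u⟩⟨u|, and the maximal eigenvalue of e^{-2tω}E(t) converges to ⟨u|M|u⟩ exponentially fast in t. -/

import Mathlib

open scoped InnerProductSpace
open Filter

/-!
Put `B t = e^{-tω} e^{tL}` and `P = |u⟩⟨u|`. In an orthonormal eigenbasis of `L`, `B t - P` is
diagonal, with entry `0` on the `ω`-eigenvector (simplicity of `ω`) and `e^{t(μ - ω)}` on the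
other eigenvectors, so `‖B t - P‖ ≤ e^{-γt}` with `γ` the spectral gap. Since
`e^{-2tω} E(t) = B M B` and `P M P = ⟨u|M|u⟩ P`, the identity
`B M B - P M P = (B - P) M B + P M (B - P)` bounds the error by `3 ‖M‖ e^{-γt}`; the norm of the
limit is `⟨u|M|u⟩` because this number is real and positive.
-/

theorem NormedSpace.exp_apply_of_apply_eq_smul {𝕜 E : Type*} [RCLike 𝕜] [NormedAddCommGroup E]
    [NormedSpace 𝕜 E] [CompleteSpace E] {A : E →L[𝕜] E} {v : E} {c : 𝕜} (h : A v = c • v) :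
    exp A v = exp c • v := by
  have hpow (n : ℕ) : (A ^ n) v = c ^ n • v := by
    induction n with
    | zero => simp
    | succ n ih => rw [pow_succ', mul_apply_eq_comp, ih, map_smul, h, smul_smul, pow_succ]
  have hA := (exp_series_hasSum_exp' (𝕂 := 𝕜) A).mapL (ContinuousLinearMap.apply 𝕜 E v)
  have hc := (exp_series_hasSum_exp' (𝕂 := 𝕜) c).smul_const v
  refine hA.unique ?_
  simpa only [ContinuousLinearMap.apply_apply, smul_apply, hpow, smul_smul,
    smul_eq_mul] using hc

section OrthonormalBasis

variable {𝕜 E ι : Type*} [RCLike 𝕜] [NormedAddCommGroup E] [InnerProductSpace 𝕜 E] [Fintype ι]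

theorem OrthonormalBasis.inner_apply_of_apply_eq_smul (b : OrthonormalBasis ι 𝕜 E)
    {A : E →L[𝕜] E} {d : ι → 𝕜} (hA : ∀ i, A (b i) = d i • b i) (i : ι) (x : E) :
    ⟪b i, A x⟫_𝕜 = d i * ⟪b i, x⟫_𝕜 := by
  conv_lhs => rw [← b.sum_repr' x]
  simp only [map_sum, map_smul, hA, smul_smul]
  rw [b.orthonormal.inner_right_fintype, mul_comm]

theorem OrthonormalBasis.opNorm_le_of_apply_eq_smul (b : OrthonormalBasis ι 𝕜 E)
    {A : E →L[𝕜] E} {d : ι → 𝕜} (hA : ∀ i, A (b i) = d i • b i) {r : ℝ} (hr : 0 ≤ r)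
    (hd : ∀ i, ‖d i‖ ≤ r) : ‖A‖ ≤ r := by
  refine A.opNorm_le_bound hr fun x => le_of_sq_le_sq ?_ (by positivity)
  calc ‖A x‖ ^ 2 = ∑ i, ‖d i‖ ^ 2 * ‖⟪b i, x⟫_𝕜‖ ^ 2 := by
        simp only [← b.sum_sq_norm_inner_right (A x), b.inner_apply_of_apply_eq_smul hA, norm_mul,
          mul_pow]
    _ ≤ ∑ i, r ^ 2 * ‖⟪b i, x⟫_𝕜‖ ^ 2 := by gcongr with i; exact hd i
    _ = (r * ‖x‖) ^ 2 := by rw [← Finset.mul_sum, b.sum_sq_norm_inner_right, mul_pow]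

end OrthonormalBasis

section RankOne

variable {𝕜 E : Type*} [RCLike 𝕜] [NormedAddCommGroup E] [InnerProductSpace 𝕜 E]

theorem innerSL_smulRight_apply_of_mem_span {u v : E} (hu : ‖u‖ = 1)
    (hv : v ∈ Submodule.span 𝕜 {u}) : (innerSL 𝕜 u).smulRight u v = v := by
  obtain ⟨a, rfl⟩ := Submodule.mem_span_singleton.mp hv
  simp [inner_self_eq_norm_sq_to_K, hu]

theorem norm_innerSL_smulRight_self (u : E) : ‖(innerSL 𝕜 u).smulRight u‖ = ‖u‖ ^ 2 := by
  rw [ContinuousLinearMap.norm_smulRight_apply, innerSL_apply_norm, sq]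

theorem innerSL_smulRight_mul_mul_self (u : E) (M : E →L[𝕜] E) :
    (innerSL 𝕜 u).smulRight u * M * (innerSL 𝕜 u).smulRight u
      = ⟪u, M u⟫_𝕜 • (innerSL 𝕜 u).smulRight u := by
  ext x
  simp [smul_smul, mul_comm]

end RankOne

theorem norm_mul_mul_sub_mul_mul_le {R : Type*} [NonUnitalSeminormedRing R] (a b m : R) :
    ‖a * m * a - b * m * b‖ ≤ ‖a - b‖ * ‖m‖ * (‖a‖ + ‖b‖) := by
  have : a * m * a - b * m * b = (a - b) * m * a + b * m * (a - b) := by noncomm_ring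
  rw [this]
  calc _ ≤ ‖a - b‖ * ‖m‖ * ‖a‖ + ‖b‖ * ‖m‖ * ‖a - b‖ :=
        (norm_add_le _ _).trans (add_le_add (norm_mul₃_le ..) (norm_mul₃_le ..))
    _ = _ := by ring

theorem norm_mul_mul_sub_mul_mul_le_of_norm_sub_le {R : Type*} [NonUnitalSeminormedRing R]
    {a b m : R} {ε : ℝ} (hb : ‖b‖ ≤ 1) (hab : ‖a - b‖ ≤ ε) (hε : ε ≤ 1) :
    ‖a * m * a - b * m * b‖ ≤ 3 * ‖m‖ * ε := by
  have ha : ‖a‖ ≤ 2 := by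
    calc ‖a‖ = ‖(a - b) + b‖ := by rw [sub_add_cancel]
      _ ≤ 2 := (norm_add_le _ _).trans (by linarith)
  calc _ ≤ ‖a - b‖ * ‖m‖ * (‖a‖ + ‖b‖) := norm_mul_mul_sub_mul_mul_le a b m
    _ ≤ ε * ‖m‖ * 3 := by
      have hε₀ : 0 ≤ ε := (norm_nonneg _).trans hab
      gcongr
      linarith
    _ = 3 * ‖m‖ * ε := by ring

theorem Finite.exists_pos_forall_le {ι : Type*} [Finite ι] (f : ι → ℝ) :
    ∃ γ > 0, ∀ i, 0 < f i → γ ≤ f i := by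
  rcases isEmpty_or_nonempty ι with hι | hι
  · exact ⟨1, one_pos, fun i => isEmptyElim i⟩
  obtain ⟨j, hj⟩ := Finite.exists_min fun i => if 0 < f i then f i else 1
  refine ⟨_, ?_, fun i hi => (hj i).trans_eq (if_pos hi)⟩
  split_ifs with h
  exacts [h, one_pos]

theorem tendsto_of_norm_sub_le_mul_exp {E : Type*} [SeminormedAddCommGroup E] {f : ℝ → E} {x : E}
    {C γ : ℝ} (hγ : 0 < γ) (h : ∀ t, 0 ≤ t → ‖f t - x‖ ≤ C * Real.exp (-γ * t)) :
    Tendsto f atTop (nhds x) := by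
  have hexp : Tendsto (fun t => C * Real.exp (-γ * t)) atTop (nhds 0) := by
    simpa using (Real.tendsto_exp_atBot.comp
      (tendsto_id.const_mul_atTop_of_neg (neg_lt_zero.mpr hγ))).const_mul C
  exact tendsto_sub_nhds_zero_iff.mp <| squeeze_zero_norm'
    (eventually_ge_atTop 0 |>.mono h) hexp

section SpectralGap

variable {H : Type*} [NormedAddCommGroup H] [InnerProductSpace ℂ H] [CompleteSpace H]
  {L : H →L[ℂ] H} {ω : ℝ} {u : H}

theorem exp_smul_apply_of_apply_eq_smul {μ : ℝ} {v : H} (hv : L v = (μ : ℂ) • v) (t : ℝ) :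
    (Real.exp (-(t * ω)) • NormedSpace.exp (t • L)) v = Real.exp (t * (μ - ω)) • v := by
  have htv : (t • L) v = ((t * μ : ℝ) : ℂ) • v := by
    rw [smul_apply, hv, ← Complex.coe_smul, smul_smul, Complex.ofReal_mul]
  rw [smul_apply, NormedSpace.exp_apply_of_apply_eq_smul htv,
    ← Complex.exp_eq_exp_ℂ, ← Complex.ofReal_exp, Complex.coe_smul, smul_smul, ← Real.exp_add]
  ring_nf

theorem IsSelfAdjoint.exists_norm_exp_sub_innerSL_smulRight_le [FiniteDimensional ℂ H]
    (hL : IsSelfAdjoint L) (hu : ‖u‖ = 1) (hev : L u = (ω : ℂ) • u)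
    (hsimple : Module.End.eigenspace (L : Module.End ℂ H) (ω : ℂ) = Submodule.span ℂ {u})
    (hmax : ∀ μ : ℂ, Module.End.HasEigenvalue (L : Module.End ℂ H) μ → μ.re ≤ ω) :
    ∃ γ > 0, ∀ t : ℝ, 0 ≤ t →
      ‖Real.exp (-(t * ω)) • NormedSpace.exp (t • L) - (innerSL ℂ u).smulRight u‖
        ≤ Real.exp (-γ * t) := by
  have hLs := hL.isSymmetric
  set b := hLs.eigenvectorBasis rfl
  set μ := hLs.eigenvalues rfl
  have hb (i) : L (b i) = (μ i : ℂ) • b i := hLs.apply_eigenvectorBasis rfl i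
  have hμ_le (i) : μ i ≤ ω := by simpa using hmax _ (hLs.hasEigenvalue_eigenvalues rfl i)
  obtain ⟨γ, hγ, hγ_le⟩ := Finite.exists_pos_forall_le fun i => ω - μ i
  refine ⟨γ, hγ, fun t ht => b.opNorm_le_of_apply_eq_smul
    (d := fun i => if μ i = ω then 0 else (Real.exp (t * (μ i - ω)) : ℂ)) (fun i => ?_)
    (Real.exp_nonneg _) (fun i => ?_)⟩
  · rw [sub_apply, exp_smul_apply_of_apply_eq_smul (hb i)]
    split_ifs with h
    · have hmem : b i ∈ Submodule.span ℂ {u} := by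
        rw [← hsimple, Module.End.mem_eigenspace_iff]
        simpa [h] using hb i
      rw [innerSL_smulRight_apply_of_mem_span hu hmem, h]
      simp
    · have horth : ⟪u, b i⟫_ℂ = 0 :=
        hLs.orthogonalFamily_eigenspaces (by exact_mod_cast Ne.symm h)
          ⟨u, Module.End.mem_eigenspace_iff.mpr hev⟩ ⟨b i, Module.End.mem_eigenspace_iff.mpr (hb i)⟩
      rw [ContinuousLinearMap.smulRight_apply, innerSL_apply_apply, horth, zero_smul, sub_zero,
        Complex.coe_smul]
  · split_ifs with h
    · simp [Real.exp_nonneg]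
    · rw [Complex.norm_real, Real.norm_of_nonneg (Real.exp_nonneg _), Real.exp_le_exp]
      nlinarith [hγ_le i (sub_pos.mpr ((hμ_le i).lt_of_ne h))]

end SpectralGap

theorem stmt19_general {H : Type*} [NormedAddCommGroup H] [InnerProductSpace ℂ H]
    [FiniteDimensional ℂ H]
    (M : H →L[ℂ] H) (hM : IsSelfAdjoint M) (hMpos : ∀ x : H, x ≠ 0 → 0 < (⟪x, M x⟫_ℂ).re)
    (L : H →L[ℂ] H) (hL : IsSelfAdjoint L)
    (ω : ℝ) (u : H) (hu : ‖u‖ = 1) (hev : L u = (ω : ℂ) • u)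
    (hsimple : Module.End.eigenspace (L : Module.End ℂ H) (ω : ℂ) = Submodule.span ℂ {u})
    (hmax : ∀ μ : ℂ, Module.End.HasEigenvalue (L : Module.End ℂ H) μ → μ.re ≤ ω)
    (E : ℝ → (H →L[ℂ] H))
    (hE : ∀ t : ℝ, E t = NormedSpace.exp (t • L) * M * NormedSpace.exp (t • L)) :
    Tendsto (fun t : ℝ => Real.exp (-2 * t * ω) • E t) atTop
      (nhds (⟪u, M u⟫_ℂ • (innerSL ℂ u).smulRight u)) ∧
    ∃ C γ : ℝ, 0 < γ ∧ ∀ t : ℝ, 0 ≤ t →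
      |‖Real.exp (-2 * t * ω) • E t‖ - (⟪u, M u⟫_ℂ).re| ≤ C * Real.exp (-γ * t) := by
  obtain ⟨γ, hγ, hB⟩ := hL.exists_norm_exp_sub_innerSL_smulRight_le hu hev hsimple hmax
  set B : ℝ → (H →L[ℂ] H) := fun t => Real.exp (-(t * ω)) • NormedSpace.exp (t • L)
  set P := (innerSL ℂ u).smulRight u
  have hP : ‖P‖ = 1 := by rw [norm_innerSL_smulRight_self, hu, one_pow]
  have hscaled (t : ℝ) : Real.exp (-2 * t * ω) • E t = B t * M * B t := by
    simp only [hE, B, smul_mul_assoc, mul_smul_comm, smul_smul, ← Real.exp_add]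
    ring_nf
  have hbound (t : ℝ) (ht : 0 ≤ t) :
      ‖Real.exp (-2 * t * ω) • E t - ⟪u, M u⟫_ℂ • P‖ ≤ 3 * ‖M‖ * Real.exp (-γ * t) := by
    rw [hscaled, ← innerSL_smulRight_mul_mul_self]
    exact norm_mul_mul_sub_mul_mul_le_of_norm_sub_le hP.le (hB t ht)
      (Real.exp_le_one_iff.mpr (by nlinarith : -γ * t ≤ 0))
  have hnorm : ‖⟪u, M u⟫_ℂ • P‖ = (⟪u, M u⟫_ℂ).re := by
    have him : (⟪u, M u⟫_ℂ).im = 0 := hM.isSymmetric.im_inner_self_apply u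
    rw [norm_smul, hP, mul_one, ← Complex.abs_re_eq_norm.mpr him,
      abs_of_pos (hMpos u (norm_ne_zero_iff.mp (hu ▸ one_ne_zero)))]
  refine ⟨tendsto_of_norm_sub_le_mul_exp hγ hbound, 3 * ‖M‖, γ, hγ, fun t ht => ?_⟩
  rw [← hnorm]
  exact (abs_norm_sub_norm_le _ _).trans (hbound t ht)

/-- Let `M` be positive-definite Hermitian and `L` Hermitian with simple
maximal eigenvalue `ω` and unit eigenvector `u`.  With `E(t) = e^{tL} M e^{tL}`, the
operator `e^{-2tω} E(t)` converges as `t → ∞` to `⟨u|M|u⟩ |u⟩⟨u|`, and its maximal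
eigenvalue (= operator norm of a positive semidefinite operator) converges to `⟨u|M|u⟩`
exponentially fast in `t`. -/
theorem stmt19 {H : Type*} [NormedAddCommGroup H] [InnerProductSpace ℂ H]
    [FiniteDimensional ℂ H] [CompleteSpace H]
    (M : H →L[ℂ] H) (hM : IsSelfAdjoint M) (hMpos : ∀ x : H, x ≠ 0 → 0 < (⟪x, M x⟫_ℂ).re)
    (L : H →L[ℂ] H) (hL : IsSelfAdjoint L)
    (ω : ℝ) (u : H) (hu : ‖u‖ = 1) (hev : L u = (ω : ℂ) • u)
    (hsimple : Module.End.eigenspace (L : Module.End ℂ H) (ω : ℂ) = Submodule.span ℂ {u})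
    (hmax : ∀ μ : ℂ, Module.End.HasEigenvalue (L : Module.End ℂ H) μ → μ.re ≤ ω)
    (E : ℝ → (H →L[ℂ] H))
    (hE : ∀ t : ℝ, E t = NormedSpace.exp (t • L) * M * NormedSpace.exp (t • L)) :
    Tendsto (fun t : ℝ => Real.exp (-2 * t * ω) • E t) atTop
      (nhds (⟪u, M u⟫_ℂ • (innerSL ℂ u).smulRight u)) ∧
    ∃ C γ : ℝ, 0 < γ ∧ ∀ t : ℝ, 0 ≤ t →
      |‖Real.exp (-2 * t * ω) • E t‖ - (⟪u, M u⟫_ℂ).re| ≤ C * Real.exp (-γ * t) :=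
  stmt19_general M hM hMpos L hL ω u hu hev hsimple hmax E hE
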